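/- Let Δ_K denote the discriminant of the imaginary quadratic subfield K of F. (i) If O_F contains an element x with N(x) = 2 or N(x) = 3, then |Δ_K| ≤ 12. (ii) If Δ_K ∈ {−3, −11} then O_F contains no element x with N(x) = 2 (hence 𝔅₂(s) = ∅ for all s > 0), and if Δ_K ∈ {−4, −7} then O_F contains no element x with N(x) = 3 (hence 𝔅₃(s) = ∅ for all s > 0). -/

import Mathlib

open NumberField nonZeroDivisors MeasureTheory

noncomputable section

/-- `‖ux‖² = 2u₁²|σ(x)|² + 2u₂²|σ'(x)|²` for `u = (u₁, u₂)`. -/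
def normSq2 {F : Type*} [Field F] (σ σ' : F →+* ℂ) (u₁ u₂ : ℝ) (x : F) : ℝ :=
  2 * u₁ ^ 2 * ‖σ x‖ ^ 2 + 2 * u₂ ^ 2 * ‖σ' x‖ ^ 2

/-- `N(x) = |σ(x)|²·|σ'(x)|²`, the absolute value of the norm of `x`. -/
def absN {F : Type*} [Field F] (σ σ' : F →+* ℂ) (x : F) : ℝ :=
  ‖σ x‖ ^ 2 * ‖σ' x‖ ^ 2

/-- `ε` is a fundamental unit: every unit is `ζ · εᵏ` with `ζ` a root of unity. -/
def IsFundamentalUnit {F : Type*} [Field F] [NumberField F] (ε : (𝓞 F)ˣ) : Prop :=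
  ∀ u : (𝓞 F)ˣ, ∃ (ζ : (𝓞 F)ˣ) (k : ℤ), (∃ n : ℕ, 0 < n ∧ ζ ^ n = 1) ∧ u = ζ * ε ^ k

/-- `𝔅_j(s) = {x ∈ O_F : N(x) = j and ‖ux‖² < 8}` with `u = (s, 1/s)`. -/
def frakB {F : Type*} [Field F] [NumberField F] (σ σ' : F →+* ℂ) (j : ℕ) (s : ℝ) : Set (𝓞 F) :=
  {x | absN σ σ' (x : F) = j ∧ normSq2 σ σ' s (1 / s) (x : F) < 8}

/-! If `x ∈ 𝓞 F` has `N(x) = m`, then `β = N_{F/K}(x) ∈ 𝓞 K` has some trace `t` and norm `m`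
(norms from an imaginary quadratic field are nonnegative). The discriminant `t² - 4m` of `(1, β)`
is `f² Δ_K`, where `f` is the determinant of `(1, β)` in an integral basis of `𝓞 K`. As `Δ_K < 0`,
`f² |Δ_K| = 4m - t²`, which bounds `|Δ_K|` by `4m` once `4m` is not a square; the excluded pairs
`(m, Δ_K)` are ruled out modulo `3, 11, 16, 7` respectively. -/

open Module InfinitePlace

section QuadraticAlgebra

variable {R S : Type*} [CommRing R] [Nontrivial R] [CommRing S] [Algebra R S] [Module.Free R S]
  [Module.Finite R S]

theorem Algebra.trace_sq_of_finrank_eq_two (h : finrank R S = 2) (x : S) :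
    Algebra.trace R S (x ^ 2) = Algebra.trace R S x ^ 2 - 2 * Algebra.norm R x := by
  let b := finBasisOfFinrankEq R S h
  rw [Algebra.trace_eq_matrix_trace b, Algebra.trace_eq_matrix_trace b,
    Algebra.norm_eq_matrix_det b, map_pow]
  simp only [Matrix.trace_fin_two, Matrix.det_fin_two, sq, Matrix.mul_apply, Fin.sum_univ_two]
  ring

theorem Algebra.discr_one_self_of_finrank_eq_two (h : finrank R S = 2) (x : S) :
    Algebra.discr R ![1, x] = Algebra.trace R S x ^ 2 - 4 * Algebra.norm R x := by
  have htrace_one : Algebra.trace R S 1 = 2 := by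
    rw [← map_one (algebraMap R S), Algebra.trace_algebraMap, h]; simp
  rw [Algebra.discr_def, Matrix.det_fin_two]
  simp [Algebra.traceMatrix_apply, Algebra.traceForm_apply, htrace_one, ← sq,
    Algebra.trace_sq_of_finrank_eq_two h]
  ring

end QuadraticAlgebra

theorem Algebra.discr_eq_det_toMatrix_sq_mul {ι R S : Type*} [Fintype ι] [DecidableEq ι]
    [CommRing R] [CommRing S] [Algebra R S] (b : Basis ι R S) (v : ι → S) :
    Algebra.discr R v = (b.toMatrix v).det ^ 2 * Algebra.discr R b := by
  conv_lhs => rw [← b.toMatrix_map_vecMul v]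
  exact Algebra.discr_of_matrix_vecMul _ _

namespace NumberField

theorem isTotallyComplex_of_forall_exists_im_ne_zero {K : Type*} [Field K]
    (h : ∀ φ : K →+* ℂ, ∃ x, (φ x).im ≠ 0) : IsTotallyComplex K where
  isComplex w := by
    rw [isComplex_iff]
    intro hreal
    obtain ⟨x, hx⟩ := h w.embedding
    exact hx (Complex.conj_eq_iff_im.mp (RingHom.congr_fun hreal x))

variable {K : Type*} [Field K] [NumberField K]

theorem exists_sq_sub_four_mul_norm_eq (hK : finrank ℚ K = 2) (β : 𝓞 K) :
    ∃ f : ℤ, Algebra.trace ℤ (𝓞 K) β ^ 2 - 4 * Algebra.norm ℤ β = f ^ 2 * discr K := by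
  have h : finrank ℤ (𝓞 K) = 2 := by rw [RingOfIntegers.rank, hK]
  let b := finBasisOfFinrankEq ℤ (𝓞 K) h
  refine ⟨(b.toMatrix ![1, β]).det, ?_⟩
  rw [← Algebra.discr_one_self_of_finrank_eq_two h, ← discr_eq_discr K b,
    Algebra.discr_eq_det_toMatrix_sq_mul b]

theorem discr_neg_of_finrank_eq_two [IsTotallyComplex K] (hK : finrank ℚ K = 2) :
    discr K < 0 := by
  have hcomplex : nrComplexPlaces K = 1 := by have := IsTotallyComplex.finrank K; omega
  have hsign := sign_discr K
  rw [hcomplex, pow_one] at hsign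
  exact Int.sign_eq_neg_one_iff_neg.mp hsign

theorem RingOfIntegers.coe_norm_int_norm {F : Type*} [Field F] [NumberField F] [Algebra K F]
    [IsScalarTower ℚ K F] (x : 𝓞 F) :
    (Algebra.norm ℤ (RingOfIntegers.norm K x) : ℚ) = Algebra.norm ℚ (x : F) := by
  have : FiniteDimensional K F := FiniteDimensional.right ℚ K F
  rw [Algebra.coe_norm_int, RingOfIntegers.coe_norm, Algebra.norm_norm]

end NumberField

section QuarticField

variable {F : Type*} [Field F] [NumberField F] {σ σ' : F →+* ℂ}

theorem absN_eq_abs_norm [IsTotallyComplex F] (hF : finrank ℚ F = 4)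
    (hσ : InfinitePlace.mk σ ≠ InfinitePlace.mk σ') (x : F) :
    absN σ σ' x = |(Algebra.norm ℚ x : ℝ)| := by
  classical
  have hcard : Fintype.card (InfinitePlace F) = 2 := by
    have := IsTotallyComplex.finrank F
    rw [card_eq_nrRealPlaces_add_nrComplexPlaces, IsTotallyComplex.nrRealPlaces_eq_zero]
    omega
  have huniv : {InfinitePlace.mk σ, InfinitePlace.mk σ'} = (Finset.univ : Finset _) :=
    Finset.eq_univ_of_card _ (by rw [Finset.card_pair hσ, hcard])
  have hprod := prod_eq_abs_norm x
  rw [← huniv, Finset.prod_pair hσ, IsTotallyComplex.mult_eq, IsTotallyComplex.mult_eq, apply,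
    apply] at hprod
  rw [absN, hprod, Rat.cast_abs]

theorem exists_sq_sub_four_mul_eq_of_absN_eq {K : Type*} [Field K] [NumberField K]
    [IsTotallyComplex K] [Algebra K F] [IsScalarTower ℚ K F] (hK : finrank ℚ K = 2)
    (hF : finrank ℚ F = 4) (hσ : InfinitePlace.mk σ ≠ InfinitePlace.mk σ') (x : 𝓞 F) {m : ℕ}
    (hx : absN σ σ' x = m) : ∃ t f : ℤ, t ^ 2 - 4 * m = f ^ 2 * discr K := by
  have := isTotallyComplex_of_algebra K F
  set β := RingOfIntegers.norm K x
  obtain ⟨f, hf⟩ := exists_sq_sub_four_mul_norm_eq hK β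
  have hnorm_nonneg : 0 ≤ Algebra.norm ℤ β := by
    nlinarith [discr_neg_of_finrank_eq_two hK, sq_nonneg f,
      sq_nonneg (Algebra.trace ℤ (𝓞 K) β)]
  have hnorm : Algebra.norm ℤ β = m := by
    have habs := absN_eq_abs_norm hF hσ (x : F)
    rw [hx, ← RingOfIntegers.coe_norm_int_norm (K := K), Rat.cast_intCast, ← Int.cast_abs,
      abs_of_nonneg hnorm_nonneg] at habs
    exact_mod_cast habs.symm
  exact ⟨_, f, hnorm ▸ hf⟩

theorem frakB_eq_empty {j : ℕ} (h : ∀ x : 𝓞 F, absN σ σ' x ≠ j) (s : ℝ) :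
    frakB σ σ' j s = ∅ :=
  Set.eq_empty_of_forall_notMem fun x hx => h x hx.1

end QuarticField

theorem Int.neg_le_of_sq_sub_eq_sq_mul {t f c d : ℤ} (hd : d < 0) (hc : ¬ IsSquare c)
    (h : t ^ 2 - c = f ^ 2 * d) : -d ≤ c := by
  have hf : f ≠ 0 := by
    rintro rfl
    exact hc ⟨t, by linarith⟩
  have : 0 < f ^ 2 := by positivity
  nlinarith [sq_nonneg t]

theorem Int.sq_sub_ne_sq_mul_of_forall_zmod (q : ℕ) {b d : ℤ}
    (h : ∀ t f : ZMod q, t ^ 2 - b ≠ f ^ 2 * d) (t f : ℤ) : t ^ 2 - b ≠ f ^ 2 * d := fun H =>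
  h t f (by exact_mod_cast congrArg (Int.cast : ℤ → ZMod q) H)

theorem stmt18
    (F K : Type*) [Field F] [NumberField F] [Field K] [NumberField K]
    [Algebra K F] [IsScalarTower ℚ K F]
    (hquartic : Module.finrank ℚ F = 4)
    (hquad : Module.finrank K F = 2)
    (hKim : ∀ φ : K →+* ℂ, ∃ x, (φ x).im ≠ 0)
    (σ σ' : F →+* ℂ)
    (hplaces : InfinitePlace.mk σ ≠ InfinitePlace.mk σ')
 :
    ((∃ x : 𝓞 F, absN σ σ' (x : F) = 2 ∨ absN σ σ' (x : F) = 3) →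
      |NumberField.discr K| ≤ 12) ∧
    ((NumberField.discr K = -3 ∨ NumberField.discr K = -11) →
      (∀ x : 𝓞 F, absN σ σ' (x : F) ≠ 2) ∧ ∀ s : ℝ, 0 < s → frakB σ σ' 2 s = ∅) ∧
    ((NumberField.discr K = -4 ∨ NumberField.discr K = -7) →
      (∀ x : 𝓞 F, absN σ σ' (x : F) ≠ 3) ∧ ∀ s : ℝ, 0 < s → frakB σ σ' 3 s = ∅) := by
  have hK : finrank ℚ K = 2 := by
    have := Module.finrank_mul_finrank ℚ K F
    rw [hquad, hquartic] at this
    omega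
  have := isTotallyComplex_of_forall_exists_im_ne_zero hKim
  have hd := discr_neg_of_finrank_eq_two hK
  have key (x : 𝓞 F) (m : ℕ) (hx : absN σ σ' x = m) :=
    exists_sq_sub_four_mul_eq_of_absN_eq hK hquartic hplaces x hx
  have bound (x : 𝓞 F) (m : ℕ) (hx : absN σ σ' x = m) (hm : ¬ IsSquare (4 * m : ℤ)) :
      |discr K| ≤ 4 * m := by
    obtain ⟨t, f, h⟩ := key x m hx
    rw [abs_of_neg hd]
    exact Int.neg_le_of_sq_sub_eq_sq_mul hd hm h
  have absent (j : ℕ) (hj : ∀ t f : ℤ, t ^ 2 - 4 * j ≠ f ^ 2 * discr K) :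
      (∀ x : 𝓞 F, absN σ σ' x ≠ j) ∧ ∀ s : ℝ, 0 < s → frakB σ σ' j s = ∅ := by
    have hne (x : 𝓞 F) : absN σ σ' x ≠ j := fun hx => by
      obtain ⟨t, f, h⟩ := key x j hx
      exact hj t f h
    exact ⟨hne, fun s _ => frakB_eq_empty hne s⟩
  refine ⟨?_, ?_, ?_⟩
  · rintro ⟨x, hx | hx⟩
    · exact (bound x 2 (by exact_mod_cast hx) (by decide +kernel)).trans (by norm_num)
    · exact bound x 3 (by exact_mod_cast hx) (by decide +kernel)
  · rintro (hΔ | hΔ) <;> refine absent 2 ?_ <;> rw [hΔ]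
    exacts [Int.sq_sub_ne_sq_mul_of_forall_zmod 3 (by decide),
      Int.sq_sub_ne_sq_mul_of_forall_zmod 11 (by decide)]
  · rintro (hΔ | hΔ) <;> refine absent 3 ?_ <;> rw [hΔ]
    exacts [Int.sq_sub_ne_sq_mul_of_forall_zmod 16 (by decide),
      Int.sq_sub_ne_sq_mul_of_forall_zmod 7 (by decide)]
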